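/- Let λ ∈ ℝ^d be a nonzero vector. The additive subgroup λ·ℤ^d = {λ·x : x ∈ ℤ^d} of ℝ is equal to c·ℤ for some real c > 0 if and only if λ is a nonzero real scalar multiple of a vector with rational coordinates. -/

import Mathlib

/-!
If `l·ℤ^d = c·ℤ`, every coordinate `l i` lies in `c·ℤ`, so `l / c` is an integer vector.
Conversely, clearing denominators writes `l = s • a` with `a ∈ ℤ^d`; by Bézout `a·ℤ^d = gcd(a)·ℤ`,
hence `l·ℤ^d = (s · gcd a)·ℤ`, and `gcd a ≠ 0` because `l ≠ 0`.
-/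

open Finset

theorem Rat.exists_ne_zero_mul_eq_intCast {ι : Type*} [Finite ι] (q : ι → ℚ) :
    ∃ N : ℤ, N ≠ 0 ∧ ∃ a : ι → ℤ, ∀ i, (a i : ℚ) = N * q i := by
  obtain ⟨⟨N, hN⟩, hq⟩ := IsLocalization.exist_integer_multiples_of_finite (nonZeroDivisors ℤ) q
  choose a ha using hq
  exact ⟨N, nonZeroDivisors.ne_zero hN, a, fun i => by simpa [zsmul_eq_mul] using ha i⟩

theorem Int.exists_sum_mul_eq_iff_gcd_dvd {ι : Type*} [Fintype ι] (a : ι → ℤ) (n : ℤ) :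
    (∃ x : ι → ℤ, n = ∑ i, a i * x i) ↔ univ.gcd a ∣ n := by
  constructor
  · rintro ⟨x, rfl⟩
    exact dvd_sum fun i hi => (gcd_dvd hi).mul_right _
  · rintro ⟨k, rfl⟩
    obtain ⟨y, hy⟩ := univ.gcd_eq_sum_mul a
    exact ⟨fun i => y i * k, by rw [hy, sum_mul]; simp only [mul_assoc]⟩

theorem setOf_abs_mul_int_eq {R : Type*} [Ring R] [LinearOrder R] (c : R) :
    {r : R | ∃ k : ℤ, r = |c| * k} = {r | ∃ k : ℤ, r = c * k} := by
  rcases abs_choice c with h | h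
  · rw [h]
  · ext r
    rw [h]
    exact ⟨fun ⟨k, hk⟩ => ⟨-k, by simp [hk]⟩, fun ⟨k, hk⟩ => ⟨-k, by simp [hk]⟩⟩

variable {R ι : Type*} [CommRing R] [Fintype ι]

theorem mem_setOf_sum_mul_int [DecidableEq ι] (l : ι → R) (i : ι) :
    l i ∈ {r : R | ∃ x : ι → ℤ, r = ∑ j, l j * x j} :=
  ⟨Pi.single i 1, by simp [Pi.single_apply]⟩

theorem setOf_sum_mul_int_eq (s : R) (a : ι → ℤ) :
    {r : R | ∃ x : ι → ℤ, r = ∑ i, s * a i * x i} = {r | ∃ k : ℤ, r = s * univ.gcd a * k} := by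
  ext r
  have hsum : ∀ x : ι → ℤ, ∑ i, s * a i * x i = s * ((∑ i, a i * x i : ℤ) : R) := fun x => by
    push_cast; rw [mul_sum]; simp only [mul_assoc]
  simp only [Set.mem_ofPred_eq, hsum]
  constructor
  · rintro ⟨x, rfl⟩
    obtain ⟨k, hk⟩ := (Int.exists_sum_mul_eq_iff_gcd_dvd a _).mp ⟨x, rfl⟩
    exact ⟨k, by rw [hk]; push_cast; ring⟩
  · rintro ⟨k, rfl⟩
    obtain ⟨x, hx⟩ := (Int.exists_sum_mul_eq_iff_gcd_dvd a _).mpr (dvd_mul_right _ k)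
    exact ⟨x, by rw [← hx]; push_cast; ring⟩

/-- For nonzero `l ∈ ℝ^d`, the subgroup `l·ℤ^d ⊆ ℝ` equals `c·ℤ` for some `c > 0`
iff `l` is a nonzero real scalar multiple of a rational vector. -/
theorem stmt_2 (d : ℕ) (l : Fin d → ℝ) (hl : l ≠ 0) :
    (∃ c : ℝ, 0 < c ∧
        {r : ℝ | ∃ x : Fin d → ℤ, r = ∑ i, l i * (x i : ℝ)} =
          {r : ℝ | ∃ k : ℤ, r = c * (k : ℝ)}) ↔
      ∃ (t : ℝ) (q : Fin d → ℚ), t ≠ 0 ∧ l = fun i => t * (q i : ℝ) := by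
  constructor
  · rintro ⟨c, hc, hset⟩
    have hmem : ∀ i, l i ∈ {r : ℝ | ∃ k : ℤ, r = c * k} := hset ▸ mem_setOf_sum_mul_int l
    choose k hk using hmem
    exact ⟨c, fun i => k i, hc.ne', funext fun i => by simp [hk i]⟩
  · rintro ⟨t, q, ht, rfl⟩
    obtain ⟨N, hN, a, ha⟩ := Rat.exists_ne_zero_mul_eq_intCast q
    have hl' : (fun i => t * q i) = fun i => t / N * a i := funext fun i => by
      have hai : (a i : ℝ) = N * q i := by exact_mod_cast ha i
      rw [hai]; field_simp
    have hgcd : univ.gcd a ≠ 0 := by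
      rw [Ne, Finset.gcd_eq_zero_iff]
      intro ha0
      refine hl (hl'.trans (funext fun i => ?_))
      simp [ha0 i (mem_univ i)]
    refine ⟨|t / N * univ.gcd a|, by positivity, ?_⟩
    rw [setOf_abs_mul_int_eq, ← setOf_sum_mul_int_eq, hl']
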